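/- arXiv:2112.06229 — 2 statements merged into one kernel-verified Lean document; each statement's English description precedes it below -/
import Mathlib

section
/- Let A = ∂ₓₓ + 1 on [0,π] with Dirichlet conditions, B(u,v) = ½ ∂ₓ(uv), P_c the orthogonal projection onto span{sin x}, P_s = I − P_c, and A_s the restriction of A to the range of P_s (which is invertible there). Define F(u,v,w) = −P_c B(u, A_s^{-1} P_s B(v,w)) for u,v,w in span{sin x}. Then F(u₁ sin x, u₂ sin x, u₃ sin x) = −(1/24) u₁u₂u₃ sin x for all real u₁,u₂,u₃. -/
/-!
`B(c sin, d sin) = (cd/2) sin 2x` is orthogonal to `sin`, so `h'' + h = (u₂u₃/2) sin 2x`.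
Testing this against `sin 2x`, which vanishes at `0` and `π` and satisfies `(sin 2x)'' = -4 sin 2x`,
the symmetry of `∂ₓₓ` under Dirichlet conditions gives `-3 ⟨h, sin 2x⟩ = u₂u₃π/4`. Since `sin²`
vanishes at `0` and `π`, one integration by parts turns `⟨B(u₁ sin, h), sin⟩` into
`-(u₁/4) ⟨h, sin 2x⟩ = u₁u₂u₃π/48`.
-/

open Real

/-- The bilinear map `B(u,v) = ½ u ∂ₓ v + ½ v ∂ₓ u = ½ ∂ₓ(uv)`. -/
noncomputable def Bq (u v : ℝ → ℝ) (x : ℝ) : ℝ :=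
  (1 / 2) * u x * deriv v x + (1 / 2) * v x * deriv u x

theorem integral_mul_deriv_eq_neg_integral_deriv_mul {a b : ℝ} {g f : ℝ → ℝ}
    (hg : ContDiff ℝ 1 g) (hf : ContDiff ℝ 1 f) (ha : g a = 0) (hb : g b = 0) :
    ∫ x in a..b, g x * deriv f x = -∫ x in a..b, deriv g x * f x := by
  rw [intervalIntegral.integral_mul_deriv_eq_deriv_mul
    (fun x _ => (hg.differentiable one_ne_zero x).hasDerivAt)
    (fun x _ => (hf.differentiable one_ne_zero x).hasDerivAt)
    (hg.continuous_deriv_one.intervalIntegrable _ _)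
    (hf.continuous_deriv_one.intervalIntegrable _ _), ha, hb]
  ring

theorem integral_mul_deriv_deriv_eq_integral_deriv_deriv_mul {a b : ℝ} {g f : ℝ → ℝ}
    (hg : ContDiff ℝ 2 g) (hf : ContDiff ℝ 2 f) (hga : g a = 0) (hgb : g b = 0)
    (hfa : f a = 0) (hfb : f b = 0) :
    ∫ x in a..b, g x * deriv (deriv f) x = ∫ x in a..b, deriv (deriv g) x * f x :=
  calc ∫ x in a..b, g x * deriv (deriv f) x
      = -∫ x in a..b, deriv g x * deriv f x :=
        integral_mul_deriv_eq_neg_integral_deriv_mul (hg.of_le one_le_two) hf.deriv' hga hgb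
    _ = ∫ x in a..b, f x * deriv (deriv g) x := by
        rw [integral_mul_deriv_eq_neg_integral_deriv_mul (hf.of_le one_le_two) hg.deriv' hfa hfb]
        simp only [mul_comm]
    _ = ∫ x in a..b, deriv (deriv g) x * f x := by simp only [mul_comm]

theorem deriv_sin_sq : deriv (fun x => sin x ^ 2) = fun x => sin (2 * x) := by
  funext x
  rw [((hasDerivAt_sin x).fun_pow 2).deriv, sin_two_mul]
  ring

theorem deriv_deriv_sin_two_mul :
    deriv (deriv fun x => sin (2 * x)) = fun x => -(4 * sin (2 * x)) := by
  have h2 (x : ℝ) : HasDerivAt (fun x : ℝ => 2 * x) 2 x := by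
    simpa using (hasDerivAt_id x).const_mul 2
  have h1 : deriv (fun x => sin (2 * x)) = fun x => cos (2 * x) * 2 :=
    funext fun x => (h2 x).sin.deriv
  funext x
  rw [h1, ((h2 x).cos.mul_const 2).deriv]
  ring

theorem integral_sin_two_mul_sq : ∫ x in (0)..π, sin (2 * x) ^ 2 = π / 2 := by
  rw [intervalIntegral.integral_comp_mul_left (fun x => sin x ^ 2) two_ne_zero, integral_sin_sq]
  simp
  ring

theorem Bq_const_mul_sin_left (c : ℝ) (v : ℝ → ℝ) (x : ℝ) :
    Bq (fun y => c * sin y) v x = c / 2 * (sin x * deriv v x + v x * cos x) := by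
  simp only [Bq, deriv_const_mul_field', Real.deriv_sin]
  ring

theorem Bq_const_mul_sin_const_mul_sin (c d x : ℝ) :
    Bq (fun y => c * sin y) (fun y => d * sin y) x = c * d * (sin x * cos x) := by
  simp only [Bq_const_mul_sin_left, deriv_const_mul_field', Real.deriv_sin]
  ring

theorem integral_Bq_const_mul_sin_const_mul_sin_mul_sin (c d : ℝ) :
    ∫ x in (0)..π, Bq (fun y => c * sin y) (fun y => d * sin y) x * sin x = 0 := by
  have hpt (x : ℝ) : Bq (fun y => c * sin y) (fun y => d * sin y) x * sin x =
      c * d * (sin x ^ 2 * cos x) := by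
    rw [Bq_const_mul_sin_const_mul_sin]
    ring
  simp [hpt, integral_sin_sq_mul_cos]

theorem integral_Bq_const_mul_sin_mul_sin {h : ℝ → ℝ} (hh : ContDiff ℝ 1 h) (c : ℝ) :
    ∫ x in (0)..π, Bq (fun y => c * sin y) h x * sin x =
      -(c / 4) * ∫ x in (0)..π, sin (2 * x) * h x := by
  have hsq : ∫ x in (0)..π, sin x ^ 2 * deriv h x = -∫ x in (0)..π, sin (2 * x) * h x := by
    rw [integral_mul_deriv_eq_neg_integral_deriv_mul (by fun_prop) hh (by simp) (by simp),
      deriv_sin_sq]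
  have hpt (x : ℝ) : Bq (fun y => c * sin y) h x * sin x =
      c / 2 * (sin x ^ 2 * deriv h x) + c / 4 * (sin (2 * x) * h x) := by
    rw [Bq_const_mul_sin_left, sin_two_mul]
    ring
  have hc : Continuous h := hh.continuous
  have hc' : Continuous (deriv h) := hh.continuous_deriv_one
  simp_rw [hpt]
  rw [intervalIntegral.integral_add
      (by apply Continuous.intervalIntegrable; fun_prop)
      (by apply Continuous.intervalIntegrable; fun_prop),
    intervalIntegral.integral_const_mul, intervalIntegral.integral_const_mul, hsq]
  ring

theorem integral_sin_two_mul_mul_of_deriv_deriv_add_eq {h : ℝ → ℝ} (hh : ContDiff ℝ 2 h)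
    (h0 : h 0 = 0) (hπ : h π = 0) (c : ℝ)
    (hode : ∀ x, deriv (deriv h) x + h x = c * sin (2 * x)) :
    ∫ x in (0)..π, sin (2 * x) * h x = -(c * π / 6) := by
  have hsymm : ∫ x in (0)..π, sin (2 * x) * deriv (deriv h) x =
      -4 * ∫ x in (0)..π, sin (2 * x) * h x := by
    rw [integral_mul_deriv_deriv_eq_integral_deriv_deriv_mul (by fun_prop) hh (by simp)
      (by simp [sin_two_mul]) h0 hπ, deriv_deriv_sin_two_mul,
      ← intervalIntegral.integral_const_mul]
    simp only [neg_mul, mul_assoc]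
  have hproj : ∫ x in (0)..π, sin (2 * x) * (deriv (deriv h) x + h x) = c * (π / 2) := by
    simp_rw [hode, ← integral_sin_two_mul_sq, ← intervalIntegral.integral_const_mul]
    congr 1 with x
    ring
  have hc : Continuous h := hh.continuous
  have hc'' : Continuous (deriv (deriv h)) := hh.deriv'.continuous_deriv_one
  simp only [mul_add] at hproj
  rw [intervalIntegral.integral_add
      (by apply Continuous.intervalIntegrable; fun_prop)
      (by apply Continuous.intervalIntegrable; fun_prop), hsymm] at hproj
  linarith

theorem stmt4_general (u₁ u₂ u₃ : ℝ) (h : ℝ → ℝ)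
    (hreg : ContDiff ℝ 2 h)
    (hbc0 : h 0 = 0) (hbcπ : h Real.pi = 0)
    (heq : ∀ x, deriv (deriv h) x + h x =
      Bq (fun y => u₂ * Real.sin y) (fun y => u₃ * Real.sin y) x -
        ((2 / Real.pi) * ∫ t in (0:ℝ)..Real.pi,
          Bq (fun y => u₂ * Real.sin y) (fun y => u₃ * Real.sin y) t * Real.sin t) * Real.sin x) :
    ∀ x : ℝ,
      -(((2 / Real.pi) * ∫ t in (0:ℝ)..Real.pi,
          Bq (fun y => u₁ * Real.sin y) h t * Real.sin t) * Real.sin x)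
        = -(1 / 24) * (u₁ * u₂ * u₃) * Real.sin x := by
  have hode (x : ℝ) : deriv (deriv h) x + h x = u₂ * u₃ / 2 * sin (2 * x) := by
    rw [heq, integral_Bq_const_mul_sin_const_mul_sin_mul_sin, Bq_const_mul_sin_const_mul_sin,
      sin_two_mul]
    ring
  intro x
  rw [integral_Bq_const_mul_sin_mul_sin (hreg.of_le one_le_two),
    integral_sin_two_mul_mul_of_deriv_deriv_add_eq hreg hbc0 hbcπ _ hode]
  field_simp
  ring

/-- with `A = ∂ₓₓ + 1`, `P_c` the projection onto `span{sin x}`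
(`P_c f = (2/π)⟨f, sin⟩ sin`), and `h = A_s⁻¹ P_s B(u₂ sin, u₃ sin)` (characterized by
`h'' + h = P_s B(u₂ sin, u₃ sin)`, `⟨h, sin⟩ = 0`, Dirichlet boundary conditions),
the map `F(u,v,w) = −P_c B(u, A_s⁻¹ P_s B(v,w))` satisfies
`F(u₁ sin x, u₂ sin x, u₃ sin x) = −(1/24) u₁u₂u₃ sin x`. -/
theorem stmt4 (u₁ u₂ u₃ : ℝ) (h : ℝ → ℝ)
    (hreg : ContDiff ℝ 2 h)
    (hbc0 : h 0 = 0) (hbcπ : h Real.pi = 0)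
    (heq : ∀ x, deriv (deriv h) x + h x =
      Bq (fun y => u₂ * Real.sin y) (fun y => u₃ * Real.sin y) x -
        ((2 / Real.pi) * ∫ t in (0:ℝ)..Real.pi,
          Bq (fun y => u₂ * Real.sin y) (fun y => u₃ * Real.sin y) t * Real.sin t) * Real.sin x)
    (horth : (∫ x in (0:ℝ)..Real.pi, h x * Real.sin x) = 0) :
    ∀ x : ℝ,
      -(((2 / Real.pi) * ∫ t in (0:ℝ)..Real.pi,
          Bq (fun y => u₁ * Real.sin y) h t * Real.sin t) * Real.sin x)
        = -(1 / 24) * (u₁ * u₂ * u₃) * Real.sin x :=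
  stmt4_general u₁ u₂ u₃ h hreg hbc0 hbcπ heq
end

section
/- Let Ẑ_k be the stationary Ornstein–Uhlenbeck process Ẑ_k(T) = e^{-λ_k ε^{-2} T} Ẑ_k(0) + ε^{-1}α_k ∫₀^T e^{-λ_k ε^{-2}(T−s)} dβ̃_k(s), where Ẑ_k(0) ∼ N(0, α_k²/(2λ_k)) is independent of β̃_k. Then for every 0 ≤ s < T and every p ≥ 1 there exists C > 0 (depending on p, α_k, λ_k but not on ε) such that E |∫_s^T Ẑ_k(r) dr|^{2p} ≤ C (T−s)^p ε^{2p}. -/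
/-!
Approximate `∫_s^T Z` by the left Riemann sums `S_n` with mesh `Δ = (T - s)/n`. Each `S_n` is a
centered Gaussian, so `E S_n^(2p) = (E S_n²)^p · E N^(2p)` for a standard normal `N`, and with
`K = α²/(2λ)` the exponential covariance gives
`E S_n² = Δ² K ∑_{i,j} e^{-λΔ|i-j|/ε²} ≤ K (T - s) (Δ + 2ε²/λ)`,
each row sum being dominated by a two-sided geometric series. Since the paths are continuous,
`S_n → ∫_s^T Z` pointwise, and Fatou's lemma passes the bound to the limit `Δ → 0`.
-/

open MeasureTheory ProbabilityTheory Filter Topology Finset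

lemma abs_mul_sub_integral_le {f : ℝ → ℝ} (hf : Continuous f) {u Δ η : ℝ} (hΔ : 0 ≤ Δ)
    (hosc : ∀ x ∈ Set.Icc u (u + Δ), |f u - f x| ≤ η) :
    |Δ * f u - ∫ x in u..u + Δ, f x| ≤ η * Δ := by
  have hconst : Δ * f u = ∫ _ in u..u + Δ, f u := by simp
  rw [hconst, ← intervalIntegral.integral_sub intervalIntegrable_const (hf.intervalIntegrable _ _)]
  have := intervalIntegral.norm_integral_le_of_norm_le_const (a := u) (b := u + Δ)
    (f := fun x => f u - f x) (C := η) fun x hx => by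
      rw [Set.uIoc_of_le (by linarith)] at hx
      exact hosc x (Set.Ioc_subset_Icc_self hx)
  simpa [abs_of_nonneg hΔ] using this

lemma abs_sum_range_mul_sub_integral_le {f : ℝ → ℝ} (hf : Continuous f) {a Δ η : ℝ} (hΔ : 0 ≤ Δ)
    (n : ℕ) (hosc : ∀ x ∈ Set.Icc a (a + n * Δ), ∀ y ∈ Set.Icc a (a + n * Δ),
      |x - y| ≤ Δ → |f x - f y| ≤ η) :
    |∑ k ∈ range n, Δ * f (a + k * Δ) - ∫ x in a..a + n * Δ, f x| ≤ n * Δ * η := by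
  induction n with
  | zero => simp
  | succ n ih =>
    have hsub : Set.Icc a (a + n * Δ) ⊆ Set.Icc a (a + (n + 1 : ℕ) * Δ) :=
      Set.Icc_subset_Icc_right (by push_cast; nlinarith)
    have hlast := abs_mul_sub_integral_le hf (u := a + n * Δ) hΔ (η := η) fun x hx => by
      refine hosc _ ⟨by nlinarith [Nat.cast_nonneg (α := ℝ) n], by push_cast; linarith⟩ _
        ⟨by nlinarith [Nat.cast_nonneg (α := ℝ) n, hx.1], by push_cast; linarith [hx.2]⟩ ?_
      rw [abs_sub_comm, abs_of_nonneg (by linarith [hx.1])]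
      linarith [hx.2]
    have hsplit : ∫ x in a..a + (n + 1 : ℕ) * Δ, f x =
        (∫ x in a..a + n * Δ, f x) + ∫ x in a + n * Δ..a + n * Δ + Δ, f x := by
      rw [intervalIntegral.integral_add_adjacent_intervals (hf.intervalIntegrable _ _)
        (hf.intervalIntegrable _ _)]
      push_cast; ring_nf
    rw [sum_range_succ, hsplit]
    calc _ = |(∑ k ∈ range n, Δ * f (a + k * Δ) - ∫ x in a..a + n * Δ, f x) +
          (Δ * f (a + n * Δ) - ∫ x in a + n * Δ..a + n * Δ + Δ, f x)| := by ring_nf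
      _ ≤ n * Δ * η + η * Δ :=
        (abs_add_le _ _).trans (add_le_add (ih fun x hx y hy => hosc x (hsub hx) y (hsub hy)) hlast)
      _ = (n + 1 : ℕ) * Δ * η := by push_cast; ring

theorem tendsto_sum_range_mul_integral {f : ℝ → ℝ} (hf : Continuous f) {a b : ℝ} (hab : a ≤ b) :
    Tendsto (fun n : ℕ => ∑ k ∈ range n, (b - a) / n * f (a + k * ((b - a) / n)))
      atTop (𝓝 (∫ x in a..b, f x)) := by
  rw [Metric.tendsto_atTop]
  intro η hη
  have hη' : 0 < η / (b - a + 1) := by positivity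
  obtain ⟨δ, hδ, hunif⟩ := Metric.uniformContinuousOn_iff_le.1
    (isCompact_Icc.uniformContinuousOn_of_continuous hf.continuousOn) _ hη'
  obtain ⟨N, hN⟩ := exists_nat_gt ((b - a) / δ)
  refine ⟨N, fun n hn => ?_⟩
  have hn0 : (0 : ℝ) < n := lt_of_le_of_lt (by positivity) (hN.trans_le (by exact_mod_cast hn))
  have hend : a + n * ((b - a) / n) = b := by field_simp; ring
  have hmesh : (b - a) / n ≤ δ := by
    rw [div_le_iff₀ hn0]
    rw [div_lt_iff₀ hδ] at hN
    nlinarith [(Nat.cast_le (α := ℝ)).2 hn]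
  have key := abs_sum_range_mul_sub_integral_le hf (div_nonneg (sub_nonneg.2 hab) hn0.le) n
    (η := η / (b - a + 1)) fun x hx y hy hxy => by
      rw [hend] at hx hy
      exact hunif x hx y hy ((Real.dist_eq x y).symm ▸ hxy.trans hmesh)
  rw [hend, mul_div_cancel₀ _ hn0.ne'] at key
  rw [Real.dist_eq]
  calc _ ≤ (b - a) * (η / (b - a + 1)) := key
    _ < η := by
      rw [mul_div_assoc', div_lt_iff₀ (by linarith)]
      nlinarith

lemma hasSum_exp_neg_mul_abs_int {c : ℝ} (hc : 0 < c) :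
    HasSum (fun k : ℤ => Real.exp (-(c * |(k : ℝ)|)))
      ((1 + Real.exp (-c)) / (1 - Real.exp (-c))) := by
  set q := Real.exp (-c)
  have hq1 : q < 1 := Real.exp_lt_one_iff.2 (by linarith)
  have hpow : ∀ n : ℕ, Real.exp (-(c * n)) = q ^ n := fun n => by
    rw [← Real.exp_nat_mul]; ring_nf
  have hgeom : HasSum (fun n : ℕ => q ^ n) (1 - q)⁻¹ :=
    hasSum_geometric_of_lt_one (Real.exp_pos _).le hq1
  convert HasSum.of_nat_of_neg_add_one (f := fun k : ℤ => Real.exp (-(c * |(k : ℝ)|)))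
    (hgeom.congr_fun fun n => by simp [hpow]) ((hgeom.mul_left q).congr_fun fun n => ?_) using 1
  · field_simp [(sub_pos.2 hq1).ne']
  · have : |((-(n + 1 : ℤ) : ℤ) : ℝ)| = ((n + 1 : ℕ) : ℝ) := by
      push_cast; rw [abs_neg]; exact abs_of_pos (by positivity)
    simp only [this, hpow, pow_succ]
    ring

lemma sum_range_exp_neg_mul_abs_sub_le {c : ℝ} (hc : 0 < c) (n i : ℕ) :
    ∑ j ∈ range n, Real.exp (-(c * |(i : ℝ) - j|)) ≤ 1 + 2 / c := by
  set q := Real.exp (-c)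
  have hq1 : q < 1 := Real.exp_lt_one_iff.2 (by linarith)
  have hcq : (c + 1) * q ≤ 1 := by
    calc (c + 1) * q ≤ Real.exp c * q := by gcongr; linarith [Real.add_one_le_exp c]
      _ = 1 := by rw [← Real.exp_add]; simp
  have hreindex : ∑ j ∈ range n, Real.exp (-(c * |(i : ℝ) - j|)) =
      ∑ k ∈ (range n).image (fun j : ℕ => (j : ℤ) - i), Real.exp (-(c * |(k : ℝ)|)) := by
    rw [sum_image fun j _ j' _ h => by simpa using h]
    refine sum_congr rfl fun j _ => ?_
    push_cast
    rw [abs_sub_comm]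
  calc _ ≤ (1 + q) / (1 - q) := hreindex ▸
        sum_le_hasSum _ (fun _ _ => (Real.exp_pos _).le) (hasSum_exp_neg_mul_abs_int hc)
    _ ≤ 1 + 2 / c := by
      rw [div_le_iff₀ (by linarith), add_mul, div_mul_eq_mul_div]
      have : 2 * (1 - q) / c ≥ 2 * q := by rw [ge_iff_le, le_div_iff₀ hc]; nlinarith
      nlinarith

lemma integral_sq_gaussianReal_zero (v : NNReal) : ∫ x, x ^ 2 ∂gaussianReal 0 v = v := by
  rw [← variance_fun_id_gaussianReal (μ := 0),
    variance_of_integral_eq_zero aemeasurable_id' integral_id_gaussianReal]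

lemma integral_pow_gaussianReal_zero (v : NNReal) (k : ℕ) :
    ∫ x, x ^ k ∂gaussianReal 0 v = √(v : ℝ) ^ k * ∫ x, x ^ k ∂gaussianReal 0 1 := by
  have hmap : (gaussianReal 0 1).map (√(v : ℝ) * ·) = gaussianReal 0 v := by
    rw [gaussianReal_map_const_mul, mul_zero, mul_one]
    congr 1
    ext
    simp
  rw [← hmap, integral_map (by fun_prop) (by fun_prop), ← integral_const_mul]
  simp_rw [mul_pow]

section

variable {Ω : Type*} [MeasurableSpace Ω] {P : Measure Ω}

lemma integral_pow_two_mul_of_map_eq_gaussianReal {X : Ω → ℝ} {v : NNReal}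
    (hX : P.map X = gaussianReal 0 v) (p : ℕ) :
    ∫ ω, X ω ^ (2 * p) ∂P = (∫ ω, X ω ^ 2 ∂P) ^ p * ∫ x, x ^ (2 * p) ∂gaussianReal 0 1 := by
  have hXm : AEMeasurable X P := AEMeasurable.of_map_ne_zero (by rw [hX]; exact NeZero.ne _)
  have hlaw : ∀ k : ℕ, ∫ ω, X ω ^ k ∂P = ∫ x, x ^ k ∂gaussianReal 0 v := fun k => by
    rw [← hX, integral_map hXm (by fun_prop)]
  rw [hlaw, hlaw, integral_sq_gaussianReal_zero, integral_pow_gaussianReal_zero, pow_mul,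
    Real.sq_sqrt v.coe_nonneg]

lemma integral_sq_sum_mul {ι : Type*} [Fintype ι] (c : ι → ℝ) {X : ι → Ω → ℝ}
    (hX : ∀ i, MemLp (X i) 2 P) :
    ∫ ω, (∑ i, c i * X i ω) ^ 2 ∂P = ∑ i, ∑ j, c i * c j * ∫ ω, X i ω * X j ω ∂P := by
  have hint : ∀ i j, Integrable (fun ω => X i ω * X j ω) P := fun i j =>
    (hX i).integrable_mul (hX j)
  simp_rw [sq, sum_mul_sum]
  have hterm : ∀ i j, Integrable (fun ω => c i * X i ω * (c j * X j ω)) P := fun i j =>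
    ((hint i j).const_mul (c i * c j)).congr (.of_forall fun ω => by ring)
  rw [integral_finsetSum _ fun i _ => integrable_finsetSum _ fun j _ => hterm i j]
  refine sum_congr rfl fun i _ => ?_
  rw [integral_finsetSum _ fun j _ => hterm i j]
  refine sum_congr rfl fun j _ => ?_
  rw [← integral_const_mul]
  congr 1 with ω
  ring

lemma integral_le_of_tendsto_of_integral_le {F : ℕ → Ω → ℝ} {f : Ω → ℝ} {b : ℕ → ℝ} {B : ℝ}
    (hF_nonneg : ∀ n, 0 ≤ᵐ[P] F n) (hF_int : ∀ n, Integrable (F n) P)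
    (hlim : ∀ᵐ ω ∂P, Tendsto (F · ω) atTop (𝓝 (f ω)))
    (hb : ∀ᶠ n in atTop, ∫ ω, F n ω ∂P ≤ b n) (hB : Tendsto b atTop (𝓝 B)) :
    ∫ ω, f ω ∂P ≤ B := by
  have hf_nonneg : 0 ≤ᵐ[P] f := by
    filter_upwards [hlim, ae_all_iff.2 hF_nonneg] with ω hω hpos
    exact ge_of_tendsto' hω hpos
  have hB_nonneg : 0 ≤ B :=
    ge_of_tendsto hB (hb.mono fun n hn => (integral_nonneg_of_ae (hF_nonneg n)).trans hn)
  have hfatou : ∫⁻ ω, ENNReal.ofReal (f ω) ∂P ≤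
      liminf (fun n => ∫⁻ ω, ENNReal.ofReal (F n ω) ∂P) atTop := by
    calc _ = ∫⁻ ω, liminf (fun n => ENNReal.ofReal (F n ω)) atTop ∂P :=
          lintegral_congr_ae (hlim.mono fun ω hω =>
            ((ENNReal.continuous_ofReal.tendsto _).comp hω).liminf_eq.symm)
      _ ≤ _ := lintegral_liminf_le' fun n => (hF_int n).aemeasurable.ennreal_ofReal
  have hbound : liminf (fun n => ∫⁻ ω, ENNReal.ofReal (F n ω) ∂P) atTop ≤ ENNReal.ofReal B := by
    rw [← ((ENNReal.continuous_ofReal.tendsto _).comp hB).liminf_eq]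
    refine liminf_le_liminf (hb.mono fun n hn => ?_)
    rw [← ofReal_integral_eq_lintegral_ofReal (hF_int n) (hF_nonneg n)]
    exact ENNReal.ofReal_le_ofReal hn
  rw [integral_eq_lintegral_of_nonneg_ae hf_nonneg
    (aestronglyMeasurable_of_tendsto_ae _ (fun n => (hF_int n).1) hlim)]
  exact ENNReal.toReal_le_of_le_ofReal hB_nonneg (hfatou.trans hbound)

lemma ProbabilityTheory.HasGaussianLaw.of_map_eq_gaussianReal {X : Ω → ℝ} {μ : ℝ} {v : NNReal}
    (hX : P.map X = gaussianReal μ v) : HasGaussianLaw X P :=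
  ⟨by rw [hX]; infer_instance⟩

lemma ProbabilityTheory.HasGaussianLaw.integrable_pow {X : Ω → ℝ} (hX : HasGaussianLaw X P) (k : ℕ) :
    Integrable (fun ω => X ω ^ k) P := by
  have := hX.isProbabilityMeasure
  exact (hX.memLp (ENNReal.natCast_ne_top k)).integrable_norm_pow'.mono'
    (hX.aemeasurable.pow_const k).aestronglyMeasurable (.of_forall fun ω => by simp)

lemma integral_sq_sum_le_of_exp_covariance {Z : ℝ → Ω → ℝ} {K lam ε a Δ : ℝ} (hK : 0 ≤ K)
    (hlam : 0 < lam) (hε : 0 < ε) (hΔ : 0 < Δ) (hZ : ∀ t, MemLp (Z t) 2 P)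
    (hcov : ∀ t s, ∫ ω, Z t ω * Z s ω ∂P = K * Real.exp (-lam * |t - s| / ε ^ 2)) (n : ℕ) :
    ∫ ω, (∑ k : Fin n, Δ * Z (a + k * Δ) ω) ^ 2 ∂P ≤ K * (n * Δ) * (Δ + 2 * ε ^ 2 / lam) := by
  set c := lam * Δ / ε ^ 2 with hc_def
  have hc : 0 < c := by positivity
  have hexp : ∀ i j : ℕ, -lam * |a + i * Δ - (a + j * Δ)| / ε ^ 2 = -(c * |(i : ℝ) - j|) :=
    fun i j => by
      rw [show a + i * Δ - (a + j * Δ) = (i - j) * Δ by ring, abs_mul, abs_of_pos hΔ, hc_def]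
      field_simp
  rw [integral_sq_sum_mul (fun _ => Δ) fun k => hZ _]
  calc ∑ i : Fin n, ∑ j : Fin n, Δ * Δ * ∫ ω, Z (a + i * Δ) ω * Z (a + j * Δ) ω ∂P
      = Δ ^ 2 * K * ∑ i ∈ range n, ∑ j ∈ range n, Real.exp (-(c * |(i : ℝ) - j|)) := by
        simp only [hcov, hexp, mul_sum]
        rw [← Fin.sum_univ_eq_sum_range]
        refine sum_congr rfl fun i _ => ?_
        rw [← Fin.sum_univ_eq_sum_range]
        refine sum_congr rfl fun j _ => by ring
    _ ≤ Δ ^ 2 * K * ∑ _i ∈ range n, (1 + 2 / c) := by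
        gcongr with i
        exact sum_range_exp_neg_mul_abs_sub_le hc n i
    _ = K * (n * Δ) * (Δ + 2 * ε ^ 2 / lam) := by
        rw [sum_const, card_range, nsmul_eq_mul, hc_def]
        field_simp

lemma integral_pow_two_mul_sum_le_of_exp_covariance {Z : ℝ → Ω → ℝ} {K lam ε a Δ : ℝ}
    {v : NNReal} (hK : 0 ≤ K) (hlam : 0 < lam) (hε : 0 < ε) (hΔ : 0 < Δ)
    (hZ : ∀ t, MemLp (Z t) 2 P)
    (hcov : ∀ t s, ∫ ω, Z t ω * Z s ω ∂P = K * Real.exp (-lam * |t - s| / ε ^ 2)) (n : ℕ)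
    (hS : P.map (fun ω => ∑ k : Fin n, Δ * Z (a + k * Δ) ω) = gaussianReal 0 v) (p : ℕ) :
    ∫ ω, (∑ k : Fin n, Δ * Z (a + k * Δ) ω) ^ (2 * p) ∂P ≤
      (K * (n * Δ) * (Δ + 2 * ε ^ 2 / lam)) ^ p * ∫ x, x ^ (2 * p) ∂gaussianReal 0 1 := by
  rw [integral_pow_two_mul_of_map_eq_gaussianReal hS]
  gcongr
  · exact integral_nonneg fun x => (even_two_mul p).pow_nonneg x
  · exact integral_sq_sum_le_of_exp_covariance hK hlam hε hΔ hZ hcov n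

end

theorem stmt9_general {Ω : Type*} [MeasurableSpace Ω] (P : Measure Ω)
    (lam α : ℝ) (hlam : 0 < lam) (p : ℕ) :
    ∃ C > (0:ℝ), ∀ ε > (0:ℝ), ∀ Z : ℝ → Ω → ℝ,
      (∀ ω, Continuous fun t => Z t ω) →
      (∀ t, Measure.map (Z t) P = gaussianReal 0 (α ^ 2 / (2 * lam)).toNNReal) →
      (∀ t s, (∫ ω, Z t ω * Z s ω ∂P) = α ^ 2 / (2 * lam) * Real.exp (-lam * |t - s| / ε ^ 2)) →
      (∀ (n : ℕ) (ts : Fin n → ℝ) (c : Fin n → ℝ), ∃ vr : NNReal,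
        Measure.map (fun ω => ∑ i, c i * Z (ts i) ω) P = gaussianReal 0 vr) →
      ∀ s T : ℝ, 0 ≤ s → s < T →
        (∫ ω, |∫ r in s..T, Z r ω| ^ (2 * p) ∂P) ≤ C * (T - s) ^ p * ε ^ (2 * p) := by
  set m := ∫ x, x ^ (2 * p) ∂gaussianReal 0 1
  have hm : 0 ≤ m := integral_nonneg fun x => (even_two_mul p).pow_nonneg x
  refine ⟨(α ^ 2 / lam ^ 2) ^ p * m + 1, by positivity, ?_⟩
  intro ε hε Z hZ_cont hZ_law hZ_cov hZ_gauss s T _ hsT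
  set K := α ^ 2 / (2 * lam)
  set Δ : ℕ → ℝ := fun n => (T - s) / n
  set S : ℕ → Ω → ℝ := fun n ω => ∑ k : Fin n, Δ n * Z (s + k * Δ n) ω
  have hS_law : ∀ n, ∃ v, P.map (S n) = gaussianReal 0 v := fun n => hZ_gauss n _ _
  have hS_tendsto : ∀ ω, Tendsto (S · ω) atTop (𝓝 (∫ r in s..T, Z r ω)) := fun ω =>
    (tendsto_sum_range_mul_integral (hZ_cont ω) hsT.le).congr fun n =>
      (Fin.sum_univ_eq_sum_range (fun k => Δ n * Z (s + k * Δ n) ω) n).symm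
  have hS_moment : ∀ n ≠ 0,
      ∫ ω, S n ω ^ (2 * p) ∂P ≤ (K * (T - s) * (Δ n + 2 * ε ^ 2 / lam)) ^ p * m := fun n hn => by
    have hnΔ : n * Δ n = T - s := mul_div_cancel₀ _ (Nat.cast_ne_zero.2 hn)
    rw [← hnΔ]
    exact integral_pow_two_mul_sum_le_of_exp_covariance (by positivity) hlam hε
      (div_pos (sub_pos.2 hsT) (Nat.cast_pos.2 (Nat.pos_of_ne_zero hn)))
      (fun t => (HasGaussianLaw.of_map_eq_gaussianReal (hZ_law t)).memLp_two) hZ_cov n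
      (hS_law n).choose_spec p
  have hbound : Tendsto (fun n => (K * (T - s) * (Δ n + 2 * ε ^ 2 / lam)) ^ p * m) atTop
      (𝓝 ((K * (T - s) * (0 + 2 * ε ^ 2 / lam)) ^ p * m)) :=
    ((((tendsto_const_div_atTop_nhds_zero_nat (T - s)).add_const _).const_mul _).pow p).mul_const m
  have key := integral_le_of_tendsto_of_integral_le
    (fun n => .of_forall fun ω => (even_two_mul p).pow_nonneg (S n ω))
    (fun n => (HasGaussianLaw.of_map_eq_gaussianReal (hS_law n).choose_spec).integrable_pow _)
    (.of_forall fun ω => (hS_tendsto ω).pow (2 * p)) ((eventually_ne_atTop 0).mono hS_moment) hbound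
  simp_rw [(even_two_mul p).pow_abs]
  calc _ ≤ _ := key
    _ = (α ^ 2 / lam ^ 2 * (T - s) * ε ^ 2) ^ p * m := by
      simp only [K, zero_add]
      field_simp
    _ = (α ^ 2 / lam ^ 2) ^ p * m * (T - s) ^ p * ε ^ (2 * p) := by
      rw [mul_pow, mul_pow, pow_mul]
      ring
    _ ≤ _ := by gcongr; linarith

/-- averaging estimate for the stationary Ornstein–Uhlenbeck process.
If `Z` is a continuous centered stationary Gaussian process with marginal law
`N(0, α²/(2λ))` and covariance `E[Z_t Z_s] = (α²/(2λ)) e^{−λ|t−s|/ε²}`, then for every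
`p ≥ 1` there is `C > 0` (independent of `ε`) such that
`E |∫_s^T Z_r dr|^{2p} ≤ C (T−s)^p ε^{2p}` for all `0 ≤ s < T`. -/
theorem stmt9 {Ω : Type*} [MeasurableSpace Ω] (P : Measure Ω) [IsProbabilityMeasure P]
    (lam α : ℝ) (hlam : 0 < lam) (p : ℕ) (hp : 1 ≤ p) :
    ∃ C > (0:ℝ), ∀ ε > (0:ℝ), ∀ Z : ℝ → Ω → ℝ,
      (∀ ω, Continuous fun t => Z t ω) →
      (∀ t, Measure.map (Z t) P = gaussianReal 0 (α ^ 2 / (2 * lam)).toNNReal) →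
      (∀ t s, (∫ ω, Z t ω * Z s ω ∂P) = α ^ 2 / (2 * lam) * Real.exp (-lam * |t - s| / ε ^ 2)) →
      (∀ (n : ℕ) (ts : Fin n → ℝ) (c : Fin n → ℝ), ∃ vr : NNReal,
        Measure.map (fun ω => ∑ i, c i * Z (ts i) ω) P = gaussianReal 0 vr) →
      ∀ s T : ℝ, 0 ≤ s → s < T →
        (∫ ω, |∫ r in s..T, Z r ω| ^ (2 * p) ∂P) ≤ C * (T - s) ^ p * ε ^ (2 * p) :=
  stmt9_general P lam α hlam p
end
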